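/- arXiv:1112.0790 — 9 statements merged into one kernel-verified Lean document; each statement's English description precedes it below -/
import Mathlib

section
/- Let G=(V,E,w) be a finite graph with real edge weights, M a matching, and y:V→ℝ_{≥0}, z:𝒱_odd→ℝ_{≥0} duals satisfying: (domination) yz(e) ≥ w(e) for every e∈E; (tightness) yz(e) = w(e) for every e∈M; (free vertex duals) y(u)=0 for every vertex u that is free with respect to M; and (full blossoms) for every B∈𝒱_odd with z(B)>0, the matching M contains exactly (|B|−1)/2 edges with both endpoints in B. Then M is a maximum weight matching: w(M) ≥ w(M') for every matching M' of G. -/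
open scoped Classical
open Finset

private def Yfun {V : Type*} (y : V → ℝ) : Sym2 V → ℝ :=
  Sym2.lift ⟨fun u v => y u + y v, by intros; ring⟩

private def Zfun {V : Type*} [Fintype V] [DecidableEq V] (z : Finset V → ℝ) :
    Sym2 V → ℝ :=
  Sym2.lift ⟨fun u v =>
    ∑ B ∈ Finset.univ.filter (fun B : Finset V => Odd B.card ∧ u ∈ B ∧ v ∈ B), z B,
    by
      intro u v
      apply Finset.sum_congr _ (fun _ _ => rfl)
      ext B; simp only [Finset.mem_filter]; tauto⟩

private lemma pair_filter_sum {V : Type*} [Fintype V] [DecidableEq V]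
    (f : V → ℝ) (u v : V) (h : u ≠ v) :
    ∑ x ∈ univ.filter (fun x => x ∈ s(u,v)), f x = f u + f v := by
  have hset : univ.filter (fun x => x ∈ s(u,v)) = {u, v} := by
    ext x; simp [Sym2.mem_iff]
  rw [hset, Finset.sum_pair h]

private lemma Yfun_eq {V : Type*} [Fintype V] [DecidableEq V]
    (y : V → ℝ) (e : Sym2 V) (he : ¬ e.IsDiag) :
    Yfun y e = ∑ x ∈ univ.filter (fun x => x ∈ e), y x := by
  induction e using Sym2.ind with
  | _ u v =>
    have h : u ≠ v := by simpa [Sym2.mk_isDiag_iff] using he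
    rw [pair_filter_sum y u v h]
    rfl

private lemma matching_vertex_sum {V : Type*} [Fintype V] [DecidableEq V]
    (N : Finset (Sym2 V))
    (hdisj : ∀ e₁ ∈ N, ∀ e₂ ∈ N, ∀ v : V, v ∈ e₁ → v ∈ e₂ → e₁ = e₂)
    (f : V → ℝ) :
    ∑ e ∈ N, ∑ x ∈ univ.filter (fun x => x ∈ e), f x
      = ∑ v ∈ univ.filter (fun v => ∃ e ∈ N, v ∈ e), f v := by
  have h1 : ∀ e ∈ N, ∑ x ∈ univ.filter (fun x => x ∈ e), f x
      = ∑ x : V, if x ∈ e then f x else 0 := by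
    intro e _; rw [Finset.sum_filter]
  rw [Finset.sum_congr rfl h1, Finset.sum_comm, Finset.sum_filter]
  refine Finset.sum_congr rfl fun v _ => ?_
  by_cases hv : ∃ e ∈ N, v ∈ e
  · obtain ⟨e₀, he₀, hve₀⟩ := hv
    have hfil : N.filter (fun e => v ∈ e) = {e₀} := by
      ext e; simp only [Finset.mem_filter, Finset.mem_singleton]
      constructor
      · rintro ⟨he, hve⟩; exact hdisj e he e₀ he₀ v hve hve₀
      · rintro rfl; exact ⟨he₀, hve₀⟩
    rw [← Finset.sum_filter, hfil, Finset.sum_singleton, if_pos ⟨e₀, he₀, hve₀⟩]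
  · rw [if_neg hv]
    exact Finset.sum_eq_zero fun e he => if_neg (fun hve => hv ⟨e, he, hve⟩)

private lemma Zfun_eq {V : Type*} [Fintype V] [DecidableEq V]
    (z : Finset V → ℝ) (e : Sym2 V) :
    Zfun z e = ∑ B ∈ univ.filter (fun B : Finset V => Odd B.card),
      if (∀ v ∈ e, v ∈ B) then z B else 0 := by
  induction e using Sym2.ind with
  | _ u v =>
    rw [← Finset.sum_filter, Finset.filter_filter]
    show (∑ B ∈ Finset.univ.filter (fun B : Finset V => Odd B.card ∧ u ∈ B ∧ v ∈ B), z B) = _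
    apply Finset.sum_congr _ (fun _ _ => rfl)
    ext B
    simp [Sym2.mem_iff, forall_eq_or_imp, and_assoc]

private lemma Z_sum {V : Type*} [Fintype V] [DecidableEq V]
    (N : Finset (Sym2 V)) (z : Finset V → ℝ) :
    ∑ e ∈ N, Zfun z e
      = ∑ B ∈ univ.filter (fun B : Finset V => Odd B.card),
          z B * (N.filter (fun e => ∀ v ∈ e, v ∈ B)).card := by
  rw [Finset.sum_congr rfl (fun e _ => Zfun_eq z e), Finset.sum_comm]
  refine Finset.sum_congr rfl fun B _ => ?_
  rw [← Finset.sum_filter, Finset.sum_const, nsmul_eq_mul, mul_comm]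

private lemma inside_card {V : Type*} [Fintype V] [DecidableEq V]
    (N : Finset (Sym2 V)) (hnd : ∀ e ∈ N, ¬ e.IsDiag)
    (hdisj : ∀ e₁ ∈ N, ∀ e₂ ∈ N, ∀ v : V, v ∈ e₁ → v ∈ e₂ → e₁ = e₂)
    (B : Finset V) (hB : Odd B.card) :
    2 * (N.filter (fun e => ∀ v ∈ e, v ∈ B)).card ≤ B.card - 1 := by
  set F := N.filter (fun e => ∀ v ∈ e, v ∈ B) with hF
  have hFsub : F ⊆ N := Finset.filter_subset _ _
  have key : ∑ e ∈ F, ∑ x ∈ univ.filter (fun x => x ∈ e), (fun v => if v ∈ B then (1:ℝ) else 0) x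
      = ∑ v ∈ univ.filter (fun v => ∃ e ∈ F, v ∈ e), (if v ∈ B then (1:ℝ) else 0) :=
    matching_vertex_sum F (fun e₁ h₁ e₂ h₂ => hdisj e₁ (hFsub h₁) e₂ (hFsub h₂)) _
  have hL : ∑ e ∈ F, ∑ x ∈ univ.filter (fun x => x ∈ e), (fun v => if v ∈ B then (1:ℝ) else 0) x
      = 2 * F.card := by
    have h2 : ∀ e ∈ F, ∑ x ∈ univ.filter (fun x => x ∈ e), (fun v => if v ∈ B then (1:ℝ) else 0) x = 2 := by
      intro e he
      obtain ⟨⟨u, v⟩, rfl⟩ := Quot.exists_rep e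
      have huv : u ≠ v := by
        have := hnd _ (hFsub he); simpa [Sym2.mk_isDiag_iff] using this
      have hin : ∀ x ∈ s(u,v), x ∈ B := (Finset.mem_filter.mp he).2
      rw [pair_filter_sum _ u v huv]
      simp only [if_pos (hin u (by simp)), if_pos (hin v (by simp))]
      norm_num
    rw [Finset.sum_congr rfl h2, Finset.sum_const, nsmul_eq_mul, mul_comm]
  have hR : ∑ v ∈ univ.filter (fun v => ∃ e ∈ F, v ∈ e), (if v ∈ B then (1:ℝ) else 0)
      ≤ B.card := by
    calc ∑ v ∈ univ.filter (fun v => ∃ e ∈ F, v ∈ e), (if v ∈ B then (1:ℝ) else 0)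
        ≤ ∑ v : V, (if v ∈ B then (1:ℝ) else 0) := by
          apply Finset.sum_le_sum_of_subset_of_nonneg (Finset.filter_subset _ _)
          intro v _ _; split <;> norm_num
      _ = B.card := by rw [← Finset.sum_filter]; simp
  have hcast : (2 * F.card : ℝ) ≤ B.card := by rw [← hL, key]; exact hR
  have hle : 2 * F.card ≤ B.card := by exact_mod_cast hcast
  obtain ⟨m, hm⟩ := hB
  omega

/-- A matching in the graph with edge set `E`: a subset of the edges, containing
no self-loops, in which distinct edges share no vertex. -/
def IsMatching {V : Type*} [Fintype V] [DecidableEq V]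
    (E M : Finset (Sym2 V)) : Prop :=
  M ⊆ E ∧ (∀ e ∈ M, ¬ e.IsDiag) ∧
    ∀ e₁ ∈ M, ∀ e₂ ∈ M, ∀ v : V, v ∈ e₁ → v ∈ e₂ → e₁ = e₂

theorem stmt3 {V : Type*} [Fintype V] [DecidableEq V]
    (E : Finset (Sym2 V)) (w : Sym2 V → ℝ)
    (M : Finset (Sym2 V)) (hM : IsMatching E M)
    (y : V → ℝ) (z : Finset V → ℝ)
    (hy : ∀ u : V, 0 ≤ y u)
    (hz : ∀ B : Finset V, Odd B.card → 0 ≤ z B)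
    (hdom : ∀ u v : V, s(u, v) ∈ E →
      w s(u, v) ≤ y u + y v +
        ∑ B ∈ Finset.univ.filter (fun B : Finset V => Odd B.card ∧ u ∈ B ∧ v ∈ B), z B)
    (htight : ∀ u v : V, s(u, v) ∈ M →
      y u + y v +
        ∑ B ∈ Finset.univ.filter (fun B : Finset V => Odd B.card ∧ u ∈ B ∧ v ∈ B), z B
        = w s(u, v))
    (hfree : ∀ v : V, (∀ e ∈ M, v ∉ e) → y v = 0)
    (hfull : ∀ B : Finset V, Odd B.card → 0 < z B →
      2 * (M.filter (fun e => ∀ v ∈ e, v ∈ B)).card = B.card - 1) :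
    ∀ M' : Finset (Sym2 V), IsMatching E M' → ∑ e ∈ M', w e ≤ ∑ e ∈ M, w e := by
  obtain ⟨hME, hMnd, hMdisj⟩ := hM
  have hdomE : ∀ e ∈ E, w e ≤ Yfun y e + Zfun z e := by
    intro e he
    induction e using Sym2.ind with
    | _ u v => simpa [Yfun, Zfun] using hdom u v he
  have htightE : ∀ e ∈ M, Yfun y e + Zfun z e = w e := by
    intro e he
    induction e using Sym2.ind with
    | _ u v => simpa [Yfun, Zfun] using htight u v he
  have hkey : ∀ N : Finset (Sym2 V), (∀ e ∈ N, ¬ e.IsDiag) →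
      (∀ e₁ ∈ N, ∀ e₂ ∈ N, ∀ v : V, v ∈ e₁ → v ∈ e₂ → e₁ = e₂) →
      ∑ e ∈ N, (Yfun y e + Zfun z e)
        = (∑ v ∈ univ.filter (fun v => ∃ e ∈ N, v ∈ e), y v)
          + ∑ B ∈ univ.filter (fun B : Finset V => Odd B.card),
              z B * (N.filter (fun e => ∀ v ∈ e, v ∈ B)).card := by
    intro N hnd hdisj
    rw [Finset.sum_add_distrib, Z_sum N z,
        Finset.sum_congr rfl (fun e he => Yfun_eq y e (hnd e he)),
        matching_vertex_sum N hdisj]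
  intro M' hM'
  obtain ⟨hM'E, hM'nd, hM'disj⟩ := hM'
  set S : ℝ := (∑ v : V, y v)
      + ∑ B ∈ univ.filter (fun B : Finset V => Odd B.card),
          z B * (((B.card : ℝ) - 1) / 2) with hS
  have h1 : ∑ e ∈ M', w e ≤ ∑ e ∈ M', (Yfun y e + Zfun z e) :=
    Finset.sum_le_sum fun e he => hdomE e (hM'E he)
  have h2 : ∑ e ∈ M', (Yfun y e + Zfun z e) ≤ S := by
    rw [hkey M' hM'nd hM'disj, hS]
    apply add_le_add
    · exact Finset.sum_le_sum_of_subset_of_nonneg (Finset.filter_subset _ _)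
        (fun v _ _ => hy v)
    · apply Finset.sum_le_sum
      intro B hB
      have hBodd : Odd B.card := (Finset.mem_filter.mp hB).2
      have hc := inside_card M' hM'nd hM'disj B hBodd
      obtain ⟨m, hm⟩ := hBodd
      have hn : 2 * (M'.filter (fun e => ∀ v ∈ e, v ∈ B)).card + 1 ≤ B.card := by omega
      have hr : 2 * ((M'.filter (fun e => ∀ v ∈ e, v ∈ B)).card : ℝ) + 1 ≤ (B.card : ℝ) := by
        exact_mod_cast hn
      have hzB : 0 ≤ z B := hz B ⟨m, hm⟩
      have : ((M'.filter (fun e => ∀ v ∈ e, v ∈ B)).card : ℝ) ≤ ((B.card : ℝ) - 1) / 2 := by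
        linarith
      exact mul_le_mul_of_nonneg_left this hzB
  have h3 : ∑ e ∈ M, (Yfun y e + Zfun z e) = S := by
    rw [hkey M hMnd hMdisj, hS]
    congr 1
    · apply Finset.sum_subset (Finset.filter_subset _ _)
      intro v _ hv
      apply hfree
      intro e he hve
      exact hv (Finset.mem_filter.mpr ⟨Finset.mem_univ v, ⟨e, he, hve⟩⟩)
    · apply Finset.sum_congr rfl
      intro B hB
      have hBodd : Odd B.card := (Finset.mem_filter.mp hB).2
      rcases (hz B hBodd).lt_or_eq with hpos | hzero
      · have hf := hfull B hBodd hpos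
        obtain ⟨m, hm⟩ := hBodd
        have hn : 2 * (M.filter (fun e => ∀ v ∈ e, v ∈ B)).card + 1 = B.card := by omega
        have hr : 2 * ((M.filter (fun e => ∀ v ∈ e, v ∈ B)).card : ℝ) + 1 = (B.card : ℝ) := by
          exact_mod_cast hn
        have hcr : ((M.filter (fun e => ∀ v ∈ e, v ∈ B)).card : ℝ)
            = ((B.card : ℝ) - 1) / 2 := by linarith
        rw [hcr]
      · rw [← hzero]; ring
  have h4 : ∑ e ∈ M, (Yfun y e + Zfun z e) = ∑ e ∈ M, w e :=
    Finset.sum_congr rfl fun e he => htightE e he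
  linarith
end

section
/- Let G=(V,E,w) be a finite graph with positive real edge weights, M a matching, and y:V→ℝ_{≥0}, z:𝒱_odd→ℝ_{≥0} duals. Let δ>0, ε̂≥0, φ≥0, and let f be the number of vertices free with respect to M. Assume: (full blossoms) for every B∈𝒱_odd with z(B)>0, M contains exactly (|B|−1)/2 edges with both endpoints in B; (near domination) yz(e) ≥ w_δ(e) − δ for every e∈E, where w_δ(e)=δ·⌊w(e)/δ⌋; (near tightness) yz(e) − w(e) ≤ ε̂·w(e) for every e∈M; and (free vertex duals) y(u)=φ for every free vertex u. Then for any maximum weight matching M* of G: w(M) ≥ (1+ε̂)^{−1}·(w(M*) − 2δ·|M*| − f·φ). -/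
open scoped Classical

/-!
Summing near domination over `M*` gives `w(M*) - 2δ|M*| ≤ ∑_{M*} yz`. The vertex part of the
right side is at most `∑_V y = fφ + ∑_M (y u + y v)` because `y ≥ 0` and `M*` is a matching. After
swapping sums, the blossom part is `∑_B z(B)·|M* ∩ E[B]|`; a matching has at most `(|B| - 1)/2`
edges inside an odd `B`, and `M` has exactly that many wherever `z(B) > 0`, so `M` dominates it
too. Hence `w(M*) - 2δ|M*| - fφ ≤ ∑_M yz ≤ (1 + ε̂) w(M)` by near tightness.
-/

open Finset

lemma Sym2.sum_toFinset_mk {V : Type*} [DecidableEq V] {u v : V} (h : ¬ s(u, v).IsDiag)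
    (y : V → ℝ) : ∑ x ∈ s(u, v).toFinset, y x = y u + y v := by
  rw [Sym2.toFinset_mk_eq, sum_pair (Sym2.mk_isDiag_iff.not.mp h)]

lemma le_mul_floor_div_add {w δ : ℝ} (hδ : 0 < δ) : w ≤ δ * ⌊w / δ⌋ + δ := by
  have h := (Int.lt_floor_add_one (w / δ)).le
  rw [div_le_iff₀ hδ] at h
  linarith

section

universe u

variable {V : Type u} [Fintype V] [DecidableEq V]

noncomputable def blossomDual (z : Finset V → ℝ) (e : Sym2 V) : ℝ :=
  ∑ B ∈ univ.filter (fun B : Finset V => Odd #B ∧ ∀ v ∈ e, v ∈ B), z B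

/-- The paper's `yz(e)`. -/
noncomputable def edgeDual (y : V → ℝ) (z : Finset V → ℝ) (e : Sym2 V) : ℝ :=
  ∑ v ∈ e.toFinset, y v + blossomDual z e

lemma edgeDual_mk (y : V → ℝ) (z : Finset V → ℝ) {u v : V} (h : ¬ s(u, v).IsDiag) :
    edgeDual y z s(u, v) =
      y u + y v + ∑ B ∈ univ.filter (fun B : Finset V => Odd #B ∧ u ∈ B ∧ v ∈ B), z B := by
  simp only [edgeDual, Sym2.sum_toFinset_mk h, blossomDual, Sym2.mem_iff, forall_eq_or_imp,
    forall_eq]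

lemma sum_blossomDual_eq (F : Finset (Sym2 V)) (z : Finset V → ℝ) :
    ∑ e ∈ F, blossomDual z e
      = ∑ B ∈ univ.filter (fun B : Finset V => Odd #B),
          z B * #(F.filter fun e => ∀ v ∈ e, v ∈ B) := by
  simp only [blossomDual, sum_filter]
  rw [sum_comm]
  refine sum_congr rfl fun B _ => ?_
  by_cases hB : Odd #B <;> simp [hB, ← sum_filter, mul_comm]

namespace IsMatching

variable {E M : Finset (Sym2 V)}

lemma pairwiseDisjoint_toFinset (hM : IsMatching E M) :
    (M : Set (Sym2 V)).PairwiseDisjoint Sym2.toFinset := by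
  intro e₁ h₁ e₂ h₂ hne
  refine disjoint_left.mpr fun v hv₁ hv₂ => hne ?_
  exact hM.2.2 e₁ h₁ e₂ h₂ v (Sym2.mem_toFinset.mp hv₁) (Sym2.mem_toFinset.mp hv₂)

lemma two_mul_card_filter_subset_le (hM : IsMatching E M) (B : Finset V) :
    2 * #(M.filter fun e => ∀ v ∈ e, v ∈ B) ≤ #B := by
  set F := M.filter fun e => ∀ v ∈ e, v ∈ B
  have hsub : F.biUnion Sym2.toFinset ⊆ B := by
    intro v hv
    obtain ⟨e, he, hve⟩ := mem_biUnion.mp hv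
    exact (mem_filter.mp he).2 v (Sym2.mem_toFinset.mp hve)
  have hcard : #(F.biUnion Sym2.toFinset) = 2 * #F := by
    rw [card_biUnion (hM.pairwiseDisjoint_toFinset.subset (coe_subset.mpr (filter_subset _ _))),
      sum_congr rfl fun e he => Sym2.card_toFinset_of_not_isDiag e (hM.2.1 e (mem_filter.mp he).1),
      sum_const, smul_eq_mul, mul_comm]
  exact hcard ▸ card_le_card hsub

lemma sum_toFinset_add_sum_free (hM : IsMatching E M) (y : V → ℝ) :
    ∑ e ∈ M, ∑ v ∈ e.toFinset, y v + ∑ v ∈ univ.filter (fun v => ∀ e ∈ M, v ∉ e), y v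
      = ∑ v, y v := by
  have hmatched : M.biUnion Sym2.toFinset = univ.filter fun v => ¬ ∀ e ∈ M, v ∉ e := by
    ext v
    simp
  rw [← sum_biUnion hM.pairwiseDisjoint_toFinset, hmatched, add_comm,
    sum_filter_add_sum_filter_not]

lemma sum_toFinset_le (hM : IsMatching E M) {y : V → ℝ} (hy : ∀ v, 0 ≤ y v) :
    ∑ e ∈ M, ∑ v ∈ e.toFinset, y v ≤ ∑ v, y v := by
  rw [← hM.sum_toFinset_add_sum_free y]
  exact le_add_of_nonneg_right (sum_nonneg fun v _ => hy v)

lemma sum_blossomDual_le_of_full {N : Finset (Sym2 V)} (hN : IsMatching E N)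
    {z : Finset V → ℝ} (hz : ∀ B : Finset V, Odd #B → 0 ≤ z B)
    (hfull : ∀ B : Finset V, Odd #B → 0 < z B →
      2 * #(M.filter fun e => ∀ v ∈ e, v ∈ B) = #B - 1) :
    ∑ e ∈ N, blossomDual z e ≤ ∑ e ∈ M, blossomDual z e := by
  rw [sum_blossomDual_eq, sum_blossomDual_eq]
  refine sum_le_sum fun B hB => ?_
  have hodd : Odd #B := (mem_filter.mp hB).2
  rcases (hz B hodd).eq_or_lt with h0 | hpos
  · simp [← h0]
  · have hcardN := hN.two_mul_card_filter_subset_le B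
    have hcardM := hfull B hodd hpos
    obtain ⟨k, hk⟩ := hodd
    have hcard :
        #(N.filter fun e => ∀ v ∈ e, v ∈ B) ≤ #(M.filter fun e => ∀ v ∈ e, v ∈ B) := by
      omega
    gcongr

lemma sum_edgeDual_le_sum_free_add {N : Finset (Sym2 V)} (hM : IsMatching E M)
    (hN : IsMatching E N) {y : V → ℝ} {z : Finset V → ℝ} (hy : ∀ v, 0 ≤ y v)
    (hz : ∀ B : Finset V, Odd #B → 0 ≤ z B)
    (hfull : ∀ B : Finset V, Odd #B → 0 < z B →
      2 * #(M.filter fun e => ∀ v ∈ e, v ∈ B) = #B - 1) :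
    ∑ e ∈ N, edgeDual y z e ≤
      ∑ v ∈ univ.filter (fun v => ∀ e ∈ M, v ∉ e), y v + ∑ e ∈ M, edgeDual y z e := by
  have hvertex := hN.sum_toFinset_le hy
  rw [← hM.sum_toFinset_add_sum_free y] at hvertex
  have hblossom := sum_blossomDual_le_of_full hN hz hfull
  simp only [edgeDual, sum_add_distrib]
  linarith

end IsMatching

end

theorem stmt4_general {V : Type*} [Fintype V] [DecidableEq V]
    (E : Finset (Sym2 V)) (w : Sym2 V → ℝ)
    (M : Finset (Sym2 V)) (hM : IsMatching E M)
    (y : V → ℝ) (z : Finset V → ℝ)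
    (hy : ∀ u : V, 0 ≤ y u)
    (hz : ∀ B : Finset V, Odd B.card → 0 ≤ z B)
    (δ : ℝ) (hδ : 0 < δ)
    (εhat : ℝ) (hεhat : 0 ≤ εhat)
    (φ : ℝ)
    (f : ℕ) (hf : f = (Finset.univ.filter (fun v : V => ∀ e ∈ M, v ∉ e)).card)
    (hfull : ∀ B : Finset V, Odd B.card → 0 < z B →
      2 * (M.filter (fun e => ∀ v ∈ e, v ∈ B)).card = B.card - 1)
    (hdom : ∀ u v : V, s(u, v) ∈ E →
      δ * (⌊w s(u, v) / δ⌋ : ℝ) - δ ≤ y u + y v +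
        ∑ B ∈ Finset.univ.filter (fun B : Finset V => Odd B.card ∧ u ∈ B ∧ v ∈ B), z B)
    (htight : ∀ u v : V, s(u, v) ∈ M →
      (y u + y v +
        ∑ B ∈ Finset.univ.filter (fun B : Finset V => Odd B.card ∧ u ∈ B ∧ v ∈ B), z B)
        - w s(u, v) ≤ εhat * w s(u, v))
    (hfree : ∀ v : V, (∀ e ∈ M, v ∉ e) → y v = φ)
    (Mstar : Finset (Sym2 V)) (hMstar : IsMatching E Mstar) :
    (1 + εhat)⁻¹ * ((∑ e ∈ Mstar, w e) - 2 * δ * Mstar.card - f * φ) ≤ ∑ e ∈ M, w e := by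
  have hstar : ∀ e ∈ Mstar, w e ≤ edgeDual y z e + 2 * δ := by
    rintro ⟨u, v⟩ he
    have := hdom u v (hMstar.1 he)
    have := le_mul_floor_div_add (w := w s(u, v)) hδ
    rw [edgeDual_mk y z (hMstar.2.1 _ he)]
    linarith
  have hMtight : ∀ e ∈ M, edgeDual y z e ≤ (1 + εhat) * w e := by
    rintro ⟨u, v⟩ he
    have := htight u v he
    rw [edgeDual_mk y z (hM.2.1 _ he)]
    linarith
  have hfreeSum : ∑ v ∈ univ.filter (fun v => ∀ e ∈ M, v ∉ e), y v = f * φ := by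
    rw [sum_congr rfl fun v hv => hfree v (mem_filter.mp hv).2, sum_const, nsmul_eq_mul, hf]
  have hdual := hM.sum_edgeDual_le_sum_free_add hMstar hy hz hfull
  rw [inv_mul_le_iff₀ (by linarith), mul_sum]
  calc ∑ e ∈ Mstar, w e - 2 * δ * #Mstar - f * φ
      ≤ ∑ e ∈ Mstar, edgeDual y z e - f * φ := by
        have := sum_le_sum hstar
        rw [sum_add_distrib, sum_const, nsmul_eq_mul] at this
        linarith
    _ ≤ ∑ e ∈ M, edgeDual y z e := by linarith
    _ ≤ ∑ e ∈ M, (1 + εhat) * w e := sum_le_sum hMtight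

theorem stmt4 {V : Type*} [Fintype V] [DecidableEq V]
    (E : Finset (Sym2 V)) (w : Sym2 V → ℝ)
    (hw : ∀ e ∈ E, 0 < w e)
    (M : Finset (Sym2 V)) (hM : IsMatching E M)
    (y : V → ℝ) (z : Finset V → ℝ)
    (hy : ∀ u : V, 0 ≤ y u)
    (hz : ∀ B : Finset V, Odd B.card → 0 ≤ z B)
    (δ : ℝ) (hδ : 0 < δ)
    (εhat : ℝ) (hεhat : 0 ≤ εhat)
    (φ : ℝ) (hφ : 0 ≤ φ)
    (f : ℕ) (hf : f = (Finset.univ.filter (fun v : V => ∀ e ∈ M, v ∉ e)).card)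
    (hfull : ∀ B : Finset V, Odd B.card → 0 < z B →
      2 * (M.filter (fun e => ∀ v ∈ e, v ∈ B)).card = B.card - 1)
    (hdom : ∀ u v : V, s(u, v) ∈ E →
      δ * (⌊w s(u, v) / δ⌋ : ℝ) - δ ≤ y u + y v +
        ∑ B ∈ Finset.univ.filter (fun B : Finset V => Odd B.card ∧ u ∈ B ∧ v ∈ B), z B)
    (htight : ∀ u v : V, s(u, v) ∈ M →
      (y u + y v +
        ∑ B ∈ Finset.univ.filter (fun B : Finset V => Odd B.card ∧ u ∈ B ∧ v ∈ B), z B)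
        - w s(u, v) ≤ εhat * w s(u, v))
    (hfree : ∀ v : V, (∀ e ∈ M, v ∉ e) → y v = φ)
    (Mstar : Finset (Sym2 V)) (hMstar : IsMatching E Mstar)
    (hmax : ∀ M' : Finset (Sym2 V), IsMatching E M' →
      ∑ e ∈ M', w e ≤ ∑ e ∈ Mstar, w e) :
    (1 + εhat)⁻¹ * ((∑ e ∈ Mstar, w e) - 2 * δ * Mstar.card - f * φ) ≤ ∑ e ∈ M, w e :=
  stmt4_general E w M hM y z hy hz δ hδ εhat hεhat φ f hf hfull hdom htight hfree Mstar hMstar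
end

section
/- Let G=(V,E,w) be a finite graph with integer edge weights w(e) ≥ 1, M a matching, and y:V→ℝ_{≥0}, z:𝒱_odd→ℝ_{≥0} duals. Let 0<ε'<1 and ε̂≥0. Assume: (full blossoms) for every B∈𝒱_odd with z(B)>0, M contains exactly (|B|−1)/2 edges with both endpoints in B; (near domination) yz(e) ≥ w(e) − ε' for every e∈E; (near tightness) yz(e) ≤ (1+ε̂)·w(e) for every e∈M; and (free vertex duals) y(u)=0 for every vertex u that is free with respect to M. Then M is a (1−ε'−ε̂)-approximate maximum weight matching: w(M) ≥ (1−ε'−ε̂)·w(M*) for any maximum weight matching M* of G. -/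
open scoped Classical

section Helpers
variable {V : Type*} [Fintype V] [DecidableEq V]

lemma sym2_subset_iff (u v : V) (B : Finset V) :
    (∀ x ∈ s(u,v), x ∈ B) ↔ (u ∈ B ∧ v ∈ B) := by
  constructor
  · intro h; exact ⟨h u (by simp), h v (by simp)⟩
  · rintro ⟨h1, h2⟩ x hx
    rcases Sym2.mem_iff.mp hx with rfl | rfl <;> assumption

lemma edge_vset (u v : V) (huv : u ≠ v) :
    Finset.univ.filter (· ∈ s(u,v)) = {u, v} := by
  ext x; simp [Sym2.mem_iff]

lemma edge_vset_card (e : Sym2 V) (he : ¬ e.IsDiag) :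
    (Finset.univ.filter (· ∈ e)).card = 2 := by
  induction e using Sym2.ind with
  | _ u v =>
    have huv : u ≠ v := by simpa using he
    rw [edge_vset u v huv, Finset.card_pair huv]

lemma matching_pairwise_disjoint {E N : Finset (Sym2 V)} (hN : IsMatching E N) :
    (↑N : Set (Sym2 V)).Pairwise
      (fun e₁ e₂ => Disjoint (Finset.univ.filter (· ∈ e₁)) (Finset.univ.filter (· ∈ e₂))) := by
  intro e₁ h₁ e₂ h₂ hne
  rw [Finset.disjoint_left]
  intro x hx1 hx2
  simp only [Finset.mem_filter] at hx1 hx2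
  exact hne (hN.2.2 e₁ h₁ e₂ h₂ x hx1.2 hx2.2)

lemma matching_count {E N : Finset (Sym2 V)} (hN : IsMatching E N)
    (B : Finset V) (hB : Odd B.card) :
    2 * (N.filter (fun e => ∀ v ∈ e, v ∈ B)).card ≤ B.card - 1 := by
  set N' := N.filter (fun e => ∀ v ∈ e, v ∈ B) with hN'
  have hsubN : N' ⊆ N := Finset.filter_subset _ _
  have hdisj : ∀ e₁ ∈ N', ∀ e₂ ∈ N', e₁ ≠ e₂ →
      Disjoint (Finset.univ.filter (· ∈ e₁)) (Finset.univ.filter (· ∈ e₂)) :=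
    fun e₁ h₁ e₂ h₂ hne =>
      matching_pairwise_disjoint hN (hsubN h₁) (hsubN h₂) hne
  have hcard : (N'.biUnion (fun e => Finset.univ.filter (· ∈ e))).card
      = ∑ e ∈ N', (Finset.univ.filter (· ∈ e)).card := Finset.card_biUnion hdisj
  have hsum : ∑ e ∈ N', (Finset.univ.filter (· ∈ e)).card = 2 * N'.card := by
    rw [Finset.sum_congr rfl (fun e he => edge_vset_card e (hN.2.1 e (hsubN he)))]
    simp [Nat.mul_comm]
  have hsubB : N'.biUnion (fun e => Finset.univ.filter (· ∈ e)) ⊆ B := by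
    intro x hx
    simp only [Finset.mem_biUnion, Finset.mem_filter, hN'] at hx
    obtain ⟨e, he, _, hxe⟩ := hx
    exact he.2 x hxe
  have hle : 2 * N'.card ≤ B.card := by
    rw [← hsum, ← hcard]; exact Finset.card_le_card hsubB
  obtain ⟨k, hk⟩ := hB
  omega

end Helpers

theorem stmt5 {V : Type*} [Fintype V] [DecidableEq V]
    (E : Finset (Sym2 V)) (w : Sym2 V → ℤ)
    (hw : ∀ e ∈ E, 1 ≤ w e)
    (M : Finset (Sym2 V)) (hM : IsMatching E M)
    (y : V → ℝ) (z : Finset V → ℝ)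
    (hy : ∀ u : V, 0 ≤ y u)
    (hz : ∀ B : Finset V, Odd B.card → 0 ≤ z B)
    (ε' : ℝ) (hε'0 : 0 < ε') (hε'1 : ε' < 1)
    (εhat : ℝ) (hεhat : 0 ≤ εhat)
    (hfull : ∀ B : Finset V, Odd B.card → 0 < z B →
      2 * (M.filter (fun e => ∀ v ∈ e, v ∈ B)).card = B.card - 1)
    (hdom : ∀ u v : V, s(u, v) ∈ E →
      (w s(u, v) : ℝ) - ε' ≤ y u + y v +
        ∑ B ∈ Finset.univ.filter (fun B : Finset V => Odd B.card ∧ u ∈ B ∧ v ∈ B), z B)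
    (htight : ∀ u v : V, s(u, v) ∈ M →
      y u + y v +
        ∑ B ∈ Finset.univ.filter (fun B : Finset V => Odd B.card ∧ u ∈ B ∧ v ∈ B), z B
        ≤ (1 + εhat) * (w s(u, v) : ℝ))
    (hfree : ∀ v : V, (∀ e ∈ M, v ∉ e) → y v = 0)
    (Mstar : Finset (Sym2 V)) (hMstar : IsMatching E Mstar)
    (hmax : ∀ M' : Finset (Sym2 V), IsMatching E M' →
      ∑ e ∈ M', (w e : ℝ) ≤ ∑ e ∈ Mstar, (w e : ℝ)) :
    (1 - ε' - εhat) * ∑ e ∈ Mstar, (w e : ℝ) ≤ ∑ e ∈ M, (w e : ℝ) := by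
  classical
  set S : Finset (Finset V) := Finset.univ.filter (fun B : Finset V => Odd B.card) with hSdef
  set ysum : Sym2 V → ℝ := fun e => ∑ v ∈ Finset.univ.filter (· ∈ e), y v with hysumdef
  set zsum : Sym2 V → ℝ := fun e => ∑ B ∈ S.filter (fun B => ∀ v ∈ e, v ∈ B), z B
    with hzsumdef
  -- edge formula for the duals
  have hedge : ∀ u v : V, u ≠ v → ysum s(u,v) + zsum s(u,v)
      = y u + y v +
        ∑ B ∈ Finset.univ.filter (fun B : Finset V => Odd B.card ∧ u ∈ B ∧ v ∈ B), z B := by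
    intro u v huv
    have h1 : ysum s(u,v) = y u + y v := by
      simp only [hysumdef]
      rw [edge_vset u v huv, Finset.sum_pair huv]
    have h2 : zsum s(u,v)
        = ∑ B ∈ Finset.univ.filter (fun B : Finset V => Odd B.card ∧ u ∈ B ∧ v ∈ B), z B := by
      simp only [hzsumdef]
      congr 1
      rw [hSdef, Finset.filter_filter]
      apply Finset.filter_congr
      intro B _
      simp [sym2_subset_iff u v B, and_assoc]
    rw [h1, h2]
  -- swap of summation
  have hswap : ∀ N : Finset (Sym2 V), ∑ e ∈ N, zsum e
      = ∑ B ∈ S, z B * ((N.filter (fun e => ∀ v ∈ e, v ∈ B)).card : ℝ) := by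
    intro N
    simp only [hzsumdef]
    calc ∑ e ∈ N, ∑ B ∈ S.filter (fun B => ∀ v ∈ e, v ∈ B), z B
        = ∑ e ∈ N, ∑ B ∈ S, if (∀ v ∈ e, v ∈ B) then z B else 0 := by
          refine Finset.sum_congr rfl fun e _ => ?_
          rw [Finset.sum_filter]
      _ = ∑ B ∈ S, ∑ e ∈ N, if (∀ v ∈ e, v ∈ B) then z B else 0 := Finset.sum_comm
      _ = ∑ B ∈ S, z B * ((N.filter (fun e => ∀ v ∈ e, v ∈ B)).card : ℝ) := by
          refine Finset.sum_congr rfl fun B _ => ?_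
          rw [← Finset.sum_filter, Finset.sum_const, nsmul_eq_mul, mul_comm]
  -- vertex side of the duals, via the covered-vertex set
  have hcover : ∀ N : Finset (Sym2 V), IsMatching E N →
      ∑ e ∈ N, ysum e = ∑ v ∈ N.biUnion (fun e => Finset.univ.filter (· ∈ e)), y v := by
    intro N hN
    rw [Finset.sum_biUnion (matching_pairwise_disjoint hN)]
  have h2 : ∑ e ∈ Mstar, ysum e ≤ ∑ v, y v := by
    rw [hcover Mstar hMstar]
    exact Finset.sum_le_sum_of_subset_of_nonneg (Finset.subset_univ _) (fun i _ _ => hy i)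
  have h4 : ∑ v, y v = ∑ e ∈ M, ysum e := by
    rw [hcover M hM]
    refine (Finset.sum_subset (Finset.subset_univ _) ?_).symm
    intro v _ hv
    refine hfree v fun e he hve => hv (Finset.mem_biUnion.mpr ⟨e, he, by simp [hve]⟩)
  -- blossom side: M* counts bounded by M counts
  have h3 : ∑ e ∈ Mstar, zsum e ≤ ∑ e ∈ M, zsum e := by
    rw [hswap Mstar, hswap M]
    refine Finset.sum_le_sum fun B hB => ?_
    have hBodd : Odd B.card := (Finset.mem_filter.mp hB).2
    rcases (hz B hBodd).eq_or_lt with h0 | h0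
    · rw [← h0]; simp
    · have hc : (Mstar.filter (fun e => ∀ v ∈ e, v ∈ B)).card
          ≤ (M.filter (fun e => ∀ v ∈ e, v ∈ B)).card := by
        have h1 := matching_count hMstar B hBodd
        have h2 := hfull B hBodd h0
        omega
      exact mul_le_mul_of_nonneg_left (by exact_mod_cast hc) h0.le
  -- near domination over M*
  have h1 : ∑ e ∈ Mstar, ((w e : ℝ) - ε') ≤ ∑ e ∈ Mstar, (ysum e + zsum e) := by
    refine Finset.sum_le_sum fun e he => ?_
    revert he
    induction e using Sym2.ind with
    | _ u v =>
      intro he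
      have huv : u ≠ v := by simpa using hMstar.2.1 _ he
      rw [hedge u v huv]
      exact hdom u v (hMstar.1 he)
  -- near tightness over M
  have h6 : ∑ e ∈ M, (ysum e + zsum e) ≤ ∑ e ∈ M, (1 + εhat) * (w e : ℝ) := by
    refine Finset.sum_le_sum fun e he => ?_
    revert he
    induction e using Sym2.ind with
    | _ u v =>
      intro he
      have huv : u ≠ v := by simpa using hM.2.1 _ he
      rw [hedge u v huv]
      exact htight u v he
  -- assemble
  have hkey : (∑ e ∈ Mstar, (w e : ℝ)) - ε' * Mstar.card
      ≤ (1 + εhat) * ∑ e ∈ M, (w e : ℝ) := by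
    have e1 : ∑ e ∈ Mstar, ((w e : ℝ) - ε')
        = (∑ e ∈ Mstar, (w e : ℝ)) - ε' * Mstar.card := by
      rw [Finset.sum_sub_distrib, Finset.sum_const, nsmul_eq_mul, mul_comm]
    have e2 : ∑ e ∈ M, (1 + εhat) * (w e : ℝ) = (1 + εhat) * ∑ e ∈ M, (w e : ℝ) :=
      (Finset.mul_sum _ _ _).symm
    rw [Finset.sum_add_distrib] at h1 h6
    linarith
  have h7 : (Mstar.card : ℝ) ≤ ∑ e ∈ Mstar, (w e : ℝ) := by
    have : ∀ e ∈ Mstar, (1 : ℝ) ≤ (w e : ℝ) := fun e he => by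
      exact_mod_cast hw e (hMstar.1 he)
    calc (Mstar.card : ℝ) = ∑ _e ∈ Mstar, (1 : ℝ) := by simp
      _ ≤ ∑ e ∈ Mstar, (w e : ℝ) := Finset.sum_le_sum this
  have h8 : ∑ e ∈ M, (w e : ℝ) ≤ ∑ e ∈ Mstar, (w e : ℝ) := hmax M hM
  have h9 := mul_le_mul_of_nonneg_left h7 hε'0.le
  have h10 := mul_le_mul_of_nonneg_left h8 hεhat
  linarith
end

section
/- Let G=(V,E,w) be a finite bipartite graph whose two color classes each have n vertices, with positive real edge weights. Let M be a matching, δ>0, and y:V→ℝ_{≥0} duals satisfying: (domination) y(u)+y(v) ≥ w_δ(e) for every edge e=(u,v)∈E, where w_δ(e)=δ·⌊w(e)/δ⌋; (near tightness) y(u)+y(v) ≤ w_δ(e)+δ for every matched edge e=(u,v)∈M; and (free vertex duals) y(u)=0 for every vertex u that is free with respect to M. Then w(M) ≥ w(M*) − 2nδ for any maximum weight matching M* of G. -/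
open scoped Classical

theorem stmt7 {V : Type*} [Fintype V] [DecidableEq V]
    (side : V → Bool) (n : ℕ)
    (hL : (Finset.univ.filter (fun v : V => side v = false)).card = n)
    (hR : (Finset.univ.filter (fun v : V => side v = true)).card = n)
    (E : Finset (Sym2 V)) (w : Sym2 V → ℝ)
    (hbip : ∀ u v : V, s(u, v) ∈ E → side u ≠ side v)
    (hw : ∀ e ∈ E, 0 < w e)
    (M : Finset (Sym2 V)) (hM : IsMatching E M)
    (δ : ℝ) (hδ : 0 < δ)
    (y : V → ℝ) (hy : ∀ u : V, 0 ≤ y u)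
    (hdom : ∀ u v : V, s(u, v) ∈ E → δ * (⌊w s(u, v) / δ⌋ : ℝ) ≤ y u + y v)
    (htight : ∀ u v : V, s(u, v) ∈ M → y u + y v ≤ δ * (⌊w s(u, v) / δ⌋ : ℝ) + δ)
    (hfree : ∀ v : V, (∀ e ∈ M, v ∉ e) → y v = 0)
    (Mstar : Finset (Sym2 V)) (hMstar : IsMatching E Mstar)
    (hmax : ∀ M' : Finset (Sym2 V), IsMatching E M' →
      ∑ e ∈ M', w e ≤ ∑ e ∈ Mstar, w e) :
    (∑ e ∈ Mstar, w e) - 2 * n * δ ≤ ∑ e ∈ M, w e := by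
  obtain ⟨hME, hMd, hMdisj⟩ := hM
  obtain ⟨hSE, hSd, hSdisj⟩ := hMstar
  set F : Sym2 V → ℝ := fun e => ∑ x ∈ Finset.univ.filter (· ∈ e), y x with hF
  have hFpair : ∀ u v : V, u ≠ v → F s(u, v) = y u + y v := by
    intro u v huv
    have hset : Finset.univ.filter (· ∈ s(u, v)) = {u, v} := by
      ext x; simp [Sym2.mem_iff]
    simp only [hF, hset, Finset.sum_pair huv]
  -- sum of F over a matching equals sum of y over matched vertices
  have key : ∀ (N : Finset (Sym2 V)),
      (∀ e₁ ∈ N, ∀ e₂ ∈ N, ∀ v : V, v ∈ e₁ → v ∈ e₂ → e₁ = e₂) →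
      ∑ e ∈ N, F e = ∑ x ∈ Finset.univ.filter (fun v => ∃ e ∈ N, v ∈ e), y x := by
    intro N hdisj
    have hset : Finset.univ.filter (fun v => ∃ e ∈ N, v ∈ e)
        = N.biUnion (fun e => Finset.univ.filter (· ∈ e)) := by
      ext x; simp
    rw [hset, Finset.sum_biUnion]
    intro e₁ h1 e₂ h2 hne
    refine Finset.disjoint_left.2 fun x hx1 hx2 => hne ?_
    simp only [Finset.mem_filter] at hx1 hx2
    exact hdisj e₁ h1 e₂ h2 x hx1.2 hx2.2
  -- card bound for matchings
  have hcard : ∀ (N : Finset (Sym2 V)), N ⊆ E →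
      (∀ e₁ ∈ N, ∀ e₂ ∈ N, ∀ v : V, v ∈ e₁ → v ∈ e₂ → e₁ = e₂) →
      N.card ≤ n := by
    intro N hNE hdisj
    have hdisj2 : ∀ e₁ ∈ N, ∀ e₂ ∈ N, e₁ ≠ e₂ →
        Disjoint (Finset.univ.filter (fun v => v ∈ e₁ ∧ side v = false))
          (Finset.univ.filter (fun v => v ∈ e₂ ∧ side v = false)) := by
      intro e₁ h1 e₂ h2 hne
      refine Finset.disjoint_left.2 fun x hx1 hx2 => hne ?_
      simp only [Finset.mem_filter] at hx1 hx2
      exact hdisj e₁ h1 e₂ h2 x hx1.2.1 hx2.2.1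
    have hsub : N.biUnion (fun e => Finset.univ.filter (fun v => v ∈ e ∧ side v = false))
        ⊆ Finset.univ.filter (fun v : V => side v = false) := by
      intro x hx
      simp only [Finset.mem_biUnion, Finset.mem_filter] at hx ⊢
      obtain ⟨e, _, _, _, h⟩ := hx
      exact ⟨Finset.mem_univ x, h⟩
    have hone : ∀ e ∈ N,
        1 ≤ (Finset.univ.filter (fun v => v ∈ e ∧ side v = false)).card := by
      intro e he
      induction e using Sym2.ind with
      | _ u v =>
        have hne := hbip u v (hNE he)
        rcases Bool.eq_false_or_eq_true (side u) with h | h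
        · have : v ∈ Finset.univ.filter (fun x => x ∈ s(u, v) ∧ side x = false) := by
            simp only [Finset.mem_filter]
            refine ⟨Finset.mem_univ v, Sym2.mem_mk_right u v, ?_⟩
            cases hv : side v
            · rfl
            · exact absurd (h.trans hv.symm) hne
          exact Finset.card_pos.2 ⟨v, this⟩ 
        · have : u ∈ Finset.univ.filter (fun x => x ∈ s(u, v) ∧ side x = false) := by
            simp only [Finset.mem_filter]
            exact ⟨Finset.mem_univ u, Sym2.mem_mk_left u v, h⟩
          exact Finset.card_pos.2 ⟨u, this⟩
    calc N.card = ∑ e ∈ N, 1 := by simp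
      _ ≤ ∑ e ∈ N, (Finset.univ.filter (fun v => v ∈ e ∧ side v = false)).card :=
          Finset.sum_le_sum hone
      _ = (N.biUnion (fun e => Finset.univ.filter (fun v => v ∈ e ∧ side v = false))).card :=
          (Finset.card_biUnion hdisj2).symm
      _ ≤ (Finset.univ.filter (fun v : V => side v = false)).card :=
          Finset.card_le_card hsub
      _ = n := hL
  have hcardM : M.card ≤ n := hcard M hME hMdisj
  have hcardS : Mstar.card ≤ n := hcard Mstar hSE hSdisj
  -- step 1: w(M*) ≤ ∑ F + |M*| δ
  have step1 : ∑ e ∈ Mstar, w e ≤ (∑ e ∈ Mstar, F e) + Mstar.card * δ := by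
    have : ∑ e ∈ Mstar, w e ≤ ∑ e ∈ Mstar, (F e + δ) := by
      refine Finset.sum_le_sum fun e he => ?_
      induction e using Sym2.ind with
      | _ u v =>
        have hEe := hSE he
        have hne : u ≠ v := by
          intro h; exact hSd _ he (by simp [h, Sym2.isDiag_iff_proj_eq])
        rw [hFpair u v hne]
        have hd := hdom u v hEe
        have hfl := Int.lt_floor_add_one (w s(u, v) / δ)
        rw [div_lt_iff₀ hδ] at hfl
        nlinarith
    rw [Finset.sum_add_distrib, Finset.sum_const, nsmul_eq_mul] at this
    exact this
  -- step 2: ∑_{M*} F ≤ ∑_univ y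
  have step2 : ∑ e ∈ Mstar, F e ≤ ∑ x : V, y x := by
    rw [key Mstar hSdisj]
    exact Finset.sum_le_sum_of_subset_of_nonneg (Finset.filter_subset _ _)
      (fun x _ _ => hy x)
  -- step 3: ∑_univ y = ∑_{M} F
  have step3 : ∑ x : V, y x = ∑ e ∈ M, F e := by
    rw [key M hMdisj]
    rw [← Finset.sum_filter_add_sum_filter_not Finset.univ (fun v => ∃ e ∈ M, v ∈ e) y]
    have : ∑ x ∈ Finset.univ.filter (fun v => ¬ ∃ e ∈ M, v ∈ e), y x = 0 := by
      refine Finset.sum_eq_zero fun x hx => ?_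
      simp only [Finset.mem_filter, not_exists, not_and] at hx
      exact hfree x fun e he => hx.2 e he
    rw [this, add_zero]
  -- step 4: ∑_{M} F ≤ w(M) + |M| δ
  have step4 : ∑ e ∈ M, F e ≤ (∑ e ∈ M, w e) + M.card * δ := by
    have : ∑ e ∈ M, F e ≤ ∑ e ∈ M, (w e + δ) := by
      refine Finset.sum_le_sum fun e he => ?_
      induction e using Sym2.ind with
      | _ u v =>
        have hne : u ≠ v := by
          intro h; exact hMd _ he (by simp [h, Sym2.isDiag_iff_proj_eq])
        rw [hFpair u v hne]
        have ht := htight u v he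
        have hfl := Int.floor_le (w s(u, v) / δ)
        have : δ * (⌊w s(u, v) / δ⌋ : ℝ) ≤ w s(u, v) := by
          rw [mul_comm, ← le_div_iff₀ hδ]; exact hfl
        linarith
    rw [Finset.sum_add_distrib, Finset.sum_const, nsmul_eq_mul] at this
    exact this
  have hbM : (M.card : ℝ) * δ ≤ n * δ := by
    have : (M.card : ℝ) ≤ n := Nat.cast_le.2 hcardM
    nlinarith
  have hbS : (Mstar.card : ℝ) * δ ≤ n * δ := by
    have : (Mstar.card : ℝ) ≤ n := Nat.cast_le.2 hcardS
    nlinarith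
  linarith
end

section
/- Let G=(V,E,w) be a finite bipartite graph whose two color classes each have n ≥ 1 vertices, with positive integer edge weights. Let δ = 2^{−k} for some natural number k, with δ ≤ 1/√n. Let M be a matching and y:V→ℝ_{≥0} duals satisfying: (domination) y(u)+y(v) ≥ w(e) for every edge e=(u,v)∈E; (near tightness) y(u)+y(v) ≤ w(e)+δ for every matched edge e=(u,v)∈M; and (free vertex duals) y(u)=0 for every vertex u that is free with respect to M. Then w(M) ≥ w(M*) − nδ ≥ w(M*) − √n for any maximum weight matching M* of G. -/
/-!
Primal–dual weak duality. For any matching `M'`, domination and `y ≥ 0` give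
`w(M') ≤ ∑ (y u + y v) over M' ≤ ∑_v y v`. Since free vertices have dual `0`, the total dual
`∑_v y v` equals the sum of `y u + y v` over the edges of `M`, which near tightness bounds by
`w(M) + |M| δ`. In a bipartite graph every edge of `M` has its own left endpoint, so `|M| ≤ n`,
and `n δ ≤ n / √n = √n`.
-/

open scoped Classical

open Finset

namespace IsMatching

variable {V : Type*} [Fintype V] [DecidableEq V] {E M : Finset (Sym2 V)}
  {β : Type*} [AddCommMonoid β]

lemma sum_toFinset_mk (hM : IsMatching E M) (y : V → β) {u v : V} (h : s(u, v) ∈ M) :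
    ∑ x ∈ s(u, v).toFinset, y x = y u + y v := by
  rw [Sym2.toFinset_mk_eq, sum_pair (Sym2.mk_isDiag_iff.not.1 (hM.2.1 _ h))]

lemma sum_sum_toFinset (hM : IsMatching E M) (y : V → β) :
    ∑ e ∈ M, ∑ v ∈ e.toFinset, y v = ∑ v ∈ M.biUnion Sym2.toFinset, y v := by
  refine (sum_biUnion fun e₁ h₁ e₂ h₂ hne => disjoint_left.2 fun v hv₁ hv₂ => hne ?_).symm
  exact hM.2.2 e₁ h₁ e₂ h₂ v (Sym2.mem_toFinset.1 hv₁) (Sym2.mem_toFinset.1 hv₂)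

variable [PartialOrder β] [IsOrderedAddMonoid β]

lemma sum_le_sum_duals (hM : IsMatching E M) {c : Sym2 V → β} {y : V → β}
    (hy : ∀ v, 0 ≤ y v) (hdom : ∀ u v, s(u, v) ∈ E → c s(u, v) ≤ y u + y v) :
    ∑ e ∈ M, c e ≤ ∑ v, y v :=
  calc ∑ e ∈ M, c e ≤ ∑ e ∈ M, ∑ v ∈ e.toFinset, y v := by
        refine sum_le_sum fun e he => ?_
        induction e using Sym2.ind with
        | _ u v => rw [hM.sum_toFinset_mk y he]; exact hdom u v (hM.1 he)
    _ = ∑ v ∈ M.biUnion Sym2.toFinset, y v := hM.sum_sum_toFinset y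
    _ ≤ ∑ v, y v := sum_le_sum_of_subset_of_nonneg (subset_univ _) fun v _ _ => hy v

lemma sum_duals_le (hM : IsMatching E M) {c : Sym2 V → β} {y : V → β} {δ : β}
    (htight : ∀ u v, s(u, v) ∈ M → y u + y v ≤ c s(u, v) + δ)
    (hfree : ∀ v, (∀ e ∈ M, v ∉ e) → y v = 0) :
    ∑ v, y v ≤ ∑ e ∈ M, c e + #M • δ :=
  calc ∑ v, y v = ∑ v ∈ M.biUnion Sym2.toFinset, y v := by
        refine (sum_subset (subset_univ _) fun v _ hv => hfree v fun e he hve => hv ?_).symm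
        exact mem_biUnion.2 ⟨e, he, Sym2.mem_toFinset.2 hve⟩
    _ = ∑ e ∈ M, ∑ v ∈ e.toFinset, y v := (hM.sum_sum_toFinset y).symm
    _ ≤ ∑ e ∈ M, (c e + δ) := by
        refine sum_le_sum fun e he => ?_
        induction e using Sym2.ind with
        | _ u v => rw [hM.sum_toFinset_mk y he]; exact htight u v he
    _ = ∑ e ∈ M, c e + #M • δ := by rw [sum_add_distrib, sum_const]

lemma card_le_card_of_forall_exists_mem (hM : IsMatching E M) {S : Finset V}
    (hS : ∀ e ∈ M, ∃ v ∈ S, v ∈ e) : #M ≤ #S :=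
  card_le_card_of_forall_subsingleton (fun e v => v ∈ e) hS
    fun v _ _ ⟨h₁, hv₁⟩ _ ⟨h₂, hv₂⟩ => hM.2.2 _ h₁ _ h₂ v hv₁ hv₂

lemma card_le_of_bipartite (hM : IsMatching E M) {side : V → Bool}
    (hbip : ∀ u v, s(u, v) ∈ E → side u ≠ side v) :
    #M ≤ #{v | side v = false} := by
  refine hM.card_le_card_of_forall_exists_mem fun e he => ?_
  induction e using Sym2.ind with
  | _ u v =>
    have huv := hbip u v (hM.1 he)
    cases hu : side u
    · exact ⟨u, by simp [hu], Sym2.mem_mk_left u v⟩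
    · exact ⟨v, by simp_all, Sym2.mem_mk_right u v⟩

end IsMatching

lemma nat_mul_le_sqrt_of_le_inv_sqrt {n : ℕ} {δ : ℝ} (hδ : δ ≤ 1 / Real.sqrt n) :
    n * δ ≤ Real.sqrt n :=
  calc n * δ ≤ n * (1 / Real.sqrt n) := by gcongr
    _ = Real.sqrt n := by rw [mul_one_div, Real.div_sqrt]

theorem stmt8_general {V : Type*} [Fintype V] [DecidableEq V]
    (side : V → Bool) (n : ℕ)
    (hL : (Finset.univ.filter (fun v : V => side v = false)).card = n)
    (E : Finset (Sym2 V)) (w : Sym2 V → ℤ)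
    (hbip : ∀ u v : V, s(u, v) ∈ E → side u ≠ side v)
    (δ : ℝ) (k : ℕ) (hδ : δ = 1 / 2 ^ k) (hδn : δ ≤ 1 / Real.sqrt n)
    (M : Finset (Sym2 V)) (hM : IsMatching E M)
    (y : V → ℝ) (hy : ∀ u : V, 0 ≤ y u)
    (hdom : ∀ u v : V, s(u, v) ∈ E → (w s(u, v) : ℝ) ≤ y u + y v)
    (htight : ∀ u v : V, s(u, v) ∈ M → y u + y v ≤ (w s(u, v) : ℝ) + δ)
    (hfree : ∀ v : V, (∀ e ∈ M, v ∉ e) → y v = 0)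
    (Mstar : Finset (Sym2 V)) (hMstar : IsMatching E Mstar) :
    (∑ e ∈ Mstar, (w e : ℝ)) - n * δ ≤ ∑ e ∈ M, (w e : ℝ) ∧
      (∑ e ∈ Mstar, (w e : ℝ)) - Real.sqrt n ≤ (∑ e ∈ Mstar, (w e : ℝ)) - n * δ := by
  have hδ_nonneg : 0 ≤ δ := by rw [hδ]; positivity
  have hcard : (#M : ℝ) ≤ n := by exact_mod_cast hL ▸ hM.card_le_of_bipartite hbip
  have hduality := (hMstar.sum_le_sum_duals (c := fun e => (w e : ℝ)) hy hdom).trans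
    (hM.sum_duals_le (c := fun e => (w e : ℝ)) htight hfree)
  rw [nsmul_eq_mul] at hduality
  have : (#M : ℝ) * δ ≤ n * δ := by gcongr
  constructor
  · linarith
  · linarith [nat_mul_le_sqrt_of_le_inv_sqrt hδn]

theorem stmt8 {V : Type*} [Fintype V] [DecidableEq V]
    (side : V → Bool) (n : ℕ) (hn : 1 ≤ n)
    (hL : (Finset.univ.filter (fun v : V => side v = false)).card = n)
    (hR : (Finset.univ.filter (fun v : V => side v = true)).card = n)
    (E : Finset (Sym2 V)) (w : Sym2 V → ℤ)
    (hbip : ∀ u v : V, s(u, v) ∈ E → side u ≠ side v)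
    (hw : ∀ e ∈ E, 1 ≤ w e)
    (δ : ℝ) (k : ℕ) (hδ : δ = 1 / 2 ^ k) (hδn : δ ≤ 1 / Real.sqrt n)
    (M : Finset (Sym2 V)) (hM : IsMatching E M)
    (y : V → ℝ) (hy : ∀ u : V, 0 ≤ y u)
    (hdom : ∀ u v : V, s(u, v) ∈ E → (w s(u, v) : ℝ) ≤ y u + y v)
    (htight : ∀ u v : V, s(u, v) ∈ M → y u + y v ≤ (w s(u, v) : ℝ) + δ)
    (hfree : ∀ v : V, (∀ e ∈ M, v ∉ e) → y v = 0)
    (Mstar : Finset (Sym2 V)) (hMstar : IsMatching E Mstar)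
    (hmax : ∀ M' : Finset (Sym2 V), IsMatching E M' →
      ∑ e ∈ M', (w e : ℝ) ≤ ∑ e ∈ Mstar, (w e : ℝ)) :
    (∑ e ∈ Mstar, (w e : ℝ)) - n * δ ≤ ∑ e ∈ M, (w e : ℝ) ∧
      (∑ e ∈ Mstar, (w e : ℝ)) - Real.sqrt n ≤ (∑ e ∈ Mstar, (w e : ℝ)) - n * δ :=
  stmt8_general side n hL E w hbip δ k hδ hδn M hM y hy hdom htight hfree Mstar hMstar
end

section
/- Let (P,≼) be a finite partially ordered set and let f:P→{1,2}. Set F = ∑_{v∈P} f(v). Then for every real t>1, either there exists a chain C ⊆ P with ∑_{v∈C} f(v) ≥ ⌈t⌉, or there exists an antichain A ⊆ P with |A| ≥ ⌈F/(2t)⌉. -/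
open Finset
open scoped Classical

noncomputable def hgt {P : Type*} [Fintype P] [PartialOrder P] (f : P → ℕ) : P → ℕ
  | v => f v + ((Finset.univ.filter (fun u => u < v)).attach.sup
    (fun u => hgt f u.1))
  termination_by v => (Finset.univ.filter (fun u => u < v)).card
  decreasing_by
    have hu : u.1 < v := (Finset.mem_filter.mp u.2).2
    apply Finset.card_lt_card
    constructor
    · intro w hw
      simp only [Finset.mem_filter, Finset.mem_univ, true_and] at *
      exact lt_trans hw hu
    · intro hsub
      have := hsub (Finset.mem_filter.mpr ⟨Finset.mem_univ _, hu⟩)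
      simp at this

theorem hgt_lt {P : Type*} [Fintype P] [PartialOrder P] (f : P → ℕ)
    (hf : ∀ v, 1 ≤ f v) {u v : P} (huv : u < v) : hgt f u < hgt f v := by
  rw [show hgt f v = f v + ((Finset.univ.filter (fun u => u < v)).attach.sup
    (fun u => hgt f u.1)) from by rw [hgt]]
  have hmem : u ∈ Finset.univ.filter (fun w => w < v) :=
    Finset.mem_filter.mpr ⟨Finset.mem_univ _, huv⟩
  have : hgt f u ≤ (Finset.univ.filter (fun u => u < v)).attach.sup
      (fun u => hgt f u.1) :=
    Finset.le_sup (f := fun u => hgt f u.1) (Finset.mem_attach _ ⟨u, hmem⟩)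
  have h1 := hf v
  omega

theorem hgt_chain {P : Type*} [Fintype P] [PartialOrder P] (f : P → ℕ) (v : P) :
    ∃ C : Finset P, IsChain (· ≤ ·) (C : Set P) ∧ (∀ x ∈ C, x ≤ v) ∧
      ∑ x ∈ C, f x = hgt f v := by
  induction v using WellFoundedLT.induction with
  | ind v ih =>
    rw [show hgt f v = f v + ((Finset.univ.filter (fun u => u < v)).attach.sup
      (fun u => hgt f u.1)) from by rw [hgt]]
    rcases Finset.eq_empty_or_nonempty (Finset.univ.filter (fun u => u < v)) with he | hne
    · refine ⟨{v}, ?_, ?_, ?_⟩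
      · simp [IsChain]
      · simp
      · simp [he]
    · obtain ⟨u, hu⟩ := hne
      obtain ⟨⟨w, hw⟩, -, hws⟩ := Finset.exists_mem_eq_sup
        ((Finset.univ.filter (fun u => u < v)).attach) ⟨⟨u, hu⟩, Finset.mem_attach _ _⟩
        (fun u => hgt f u.1)
      have hwv : w < v := (Finset.mem_filter.mp hw).2
      obtain ⟨C, hC, hle, hsum⟩ := ih w hwv
      have hvC : v ∉ C := fun h => absurd (hle v h) (not_le_of_gt hwv)
      refine ⟨insert v C, ?_, ?_, ?_⟩
      · intro a ha b hb hab
        simp only [Finset.coe_insert, Set.mem_insert_iff] at ha hb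
        rcases ha with rfl | ha <;> rcases hb with rfl | hb
        · exact absurd rfl hab
        · exact Or.inr ((hle b hb).trans hwv.le)
        · exact Or.inl ((hle a ha).trans hwv.le)
        · exact hC ha hb hab
      · intro x hx
        rcases Finset.mem_insert.mp hx with rfl | hx
        · exact le_refl _
        · exact (hle x hx).trans hwv.le
      · rw [Finset.sum_insert hvC, hsum, hws]
theorem stmt9 {P : Type*} [Fintype P] [PartialOrder P]
    (f : P → ℕ) (hf : ∀ v : P, f v = 1 ∨ f v = 2)
    (F : ℕ) (hF : F = ∑ v : P, f v)
    (t : ℝ) (ht : 1 < t) :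
    (∃ C : Finset P, IsChain (· ≤ ·) (C : Set P) ∧
      (⌈t⌉ : ℝ) ≤ ∑ v ∈ C, (f v : ℝ)) ∨
    (∃ A : Finset P, IsAntichain (· ≤ ·) (A : Set P) ∧
      (⌈(F : ℝ) / (2 * t)⌉ : ℝ) ≤ A.card) := by
  by_cases hc : ∃ C : Finset P, IsChain (· ≤ ·) (C : Set P) ∧
      (⌈t⌉ : ℝ) ≤ ∑ v ∈ C, (f v : ℝ)
  · exact Or.inl hc
  push_neg at hc
  right
  have hf1 : ∀ v, 1 ≤ f v := fun v => by rcases hf v with h | h <;> omega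
  set k : ℕ := ⌈t⌉.toNat with hk
  have hceil : (2 : ℤ) ≤ ⌈t⌉ := by
    have : (1 : ℝ) < (⌈t⌉ : ℝ) := lt_of_lt_of_le ht (Int.le_ceil t)
    exact_mod_cast this
  have hk2 : 2 ≤ k := by omega
  have hkcast : ((k : ℤ)) = ⌈t⌉ := Int.toNat_of_nonneg (by omega)
  have hkR : ((k : ℝ)) = (⌈t⌉ : ℝ) := by exact_mod_cast congrArg (Int.cast : ℤ → ℝ) hkcast
  -- bounds on hgt
  have hlow : ∀ v : P, 1 ≤ hgt f v := by
    intro v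
    rw [hgt]
    have := hf1 v
    omega
  have hupp : ∀ v : P, hgt f v ≤ k - 1 := by
    intro v
    obtain ⟨C, hC, -, hsum⟩ := hgt_chain f v
    have h1 : (∑ x ∈ C, (f x : ℝ)) < (⌈t⌉ : ℝ) := hc C hC
    have h2 : ((hgt f v : ℕ) : ℝ) < (⌈t⌉ : ℝ) := by
      rw [← hsum]; push_cast; exact h1
    rw [← hkR] at h2
    have : hgt f v < k := by exact_mod_cast h2
    omega
  -- fiberwise count
  have hmaps : ∀ v ∈ Finset.univ, hgt f v ∈ Finset.Icc 1 (k - 1) := by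
    intro v _
    exact Finset.mem_Icc.mpr ⟨hlow v, hupp v⟩
  have hcard : (Finset.univ : Finset P).card =
      ∑ i ∈ Finset.Icc 1 (k - 1), (Finset.univ.filter (fun v => hgt f v = i)).card :=
    Finset.card_eq_sum_card_fiberwise hmaps
  have hne : (Finset.Icc 1 (k - 1)).Nonempty := ⟨1, Finset.mem_Icc.mpr ⟨le_refl _, by omega⟩⟩
  obtain ⟨i0, -, hi0⟩ := Finset.exists_max_image (Finset.Icc 1 (k - 1))
    (fun i => (Finset.univ.filter (fun v => hgt f v = i)).card) hne
  set A : Finset P := Finset.univ.filter (fun v => hgt f v = i0) with hA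
  have hPle : (Finset.univ : Finset P).card ≤ (k - 1) * A.card := by
    calc (Finset.univ : Finset P).card
        = ∑ i ∈ Finset.Icc 1 (k - 1), (Finset.univ.filter (fun v => hgt f v = i)).card := hcard
      _ ≤ (Finset.Icc 1 (k - 1)).card * A.card := by
          rw [← smul_eq_mul]
          exact Finset.sum_le_card_nsmul _ _ _ (fun i hi => hi0 i hi)
      _ = (k - 1) * A.card := by rw [Nat.card_Icc]; congr 1
  have hanti : IsAntichain (· ≤ ·) (A : Set P) := by
    intro a ha b hb hne hab
    simp only [hA, Finset.coe_filter, Set.mem_setOf_eq, Finset.mem_univ, true_and] at ha hb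
    have : a < b := lt_of_le_of_ne hab hne
    have := hgt_lt f hf1 this
    omega
  refine ⟨A, hanti, ?_⟩
  -- arithmetic
  have hFle : F ≤ 2 * (Finset.univ : Finset P).card := by
    rw [hF]
    calc ∑ v : P, f v ≤ ∑ _v : P, 2 := Finset.sum_le_sum (fun v _ => by rcases hf v with h | h <;> omega)
      _ = 2 * (Finset.univ : Finset P).card := by rw [Finset.sum_const, smul_eq_mul, mul_comm]
  have hFle2 : F ≤ 2 * ((k - 1) * A.card) := by omega
  have hkt : ((k : ℝ)) - 1 ≤ t := by
    have := Int.ceil_lt_add_one t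
    rw [← hkR] at this
    linarith
  have hk1R : (((k - 1 : ℕ)) : ℝ) = (k : ℝ) - 1 := by
    have : (1 : ℕ) ≤ k := by omega
    push_cast [Nat.cast_sub this]; ring
  have hreal : (F : ℝ) ≤ 2 * t * A.card := by
    have h1 : (F : ℝ) ≤ 2 * ((((k - 1 : ℕ)) : ℝ) * A.card) := by exact_mod_cast hFle2
    rw [hk1R] at h1
    have h2 : (0 : ℝ) ≤ (A.card : ℝ) := Nat.cast_nonneg _
    nlinarith
  have hdiv : (F : ℝ) / (2 * t) ≤ ((A.card : ℤ) : ℝ) := by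
    rw [div_le_iff₀ (by linarith : (0:ℝ) < 2 * t)]
    push_cast
    linarith
  have := Int.ceil_le.mpr hdiv
  exact_mod_cast this
end

section
/- Let T:ℕ→ℕ satisfy T(0)=0 and T(b) ≤ T(b − ⌈√b/2⌉) + 1 for every b ≥ 1. Then T(b) ≤ 4√b for every b∈ℕ. -/
set_option maxHeartbeats 1000000


theorem stmt11 (T : ℕ → ℕ) (h0 : T 0 = 0)
    (hrec : ∀ b : ℕ, 1 ≤ b → T b ≤ T (b - ⌈Real.sqrt b / 2⌉₊) + 1) :
    ∀ b : ℕ, (T b : ℝ) ≤ 4 * Real.sqrt b := by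
  intro b
  induction b using Nat.strong_induction_on with
  | _ b ih =>
    rcases Nat.eq_zero_or_pos b with rfl | hb
    · simp [h0]
    · set k := ⌈Real.sqrt b / 2⌉₊ with hkdef
      have hb1 : (1:ℝ) ≤ (b:ℝ) := by exact_mod_cast hb
      have hs1 : (1:ℝ) ≤ Real.sqrt b := by
        rw [show (1:ℝ) = Real.sqrt 1 by simp]
        exact Real.sqrt_le_sqrt hb1
      have hssq : Real.sqrt b ^ 2 = (b:ℝ) := Real.sq_sqrt (by linarith)
      have hsle : Real.sqrt b ≤ (b:ℝ) := by nlinarith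
      have hk1 : 1 ≤ k := Nat.one_le_iff_ne_zero.mpr (by
        simp only [hkdef, ne_eq, Nat.ceil_eq_zero, not_le]
        linarith)
      have hkb : k ≤ b := by
        rw [hkdef, Nat.ceil_le]
        linarith
      have hklow : Real.sqrt b / 2 ≤ (k:ℝ) := Nat.le_ceil _
      have hklt : b - k < b := Nat.sub_lt hb hk1
      have hIH := ih (b - k) hklt
      have hcast : ((b - k : ℕ) : ℝ) = (b:ℝ) - (k:ℝ) := by
        rw [Nat.cast_sub hkb]
      have hnn : 0 ≤ (b:ℝ) - (k:ℝ) := by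
        have : (k:ℝ) ≤ (b:ℝ) := by exact_mod_cast hkb
        linarith
      have hu0 : 0 ≤ Real.sqrt ((b:ℝ) - (k:ℝ)) := Real.sqrt_nonneg _
      have husq : Real.sqrt ((b:ℝ) - (k:ℝ)) ^ 2 = (b:ℝ) - (k:ℝ) :=
        Real.sq_sqrt hnn
      have hkey : Real.sqrt ((b:ℝ) - (k:ℝ)) ≤ Real.sqrt b - 1/4 := by
        nlinarith [sq_nonneg (Real.sqrt ((b:ℝ) - (k:ℝ)) - (Real.sqrt b - 1/4)),
          sq_nonneg (Real.sqrt ((b:ℝ) - (k:ℝ)) + (Real.sqrt b - 1/4))]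
      have hrec' := hrec b hb
      calc (T b : ℝ) ≤ ((T (b - k) + 1 : ℕ) : ℝ) := Nat.cast_le.mpr hrec'
        _ = (T (b - k) : ℝ) + 1 := by push_cast; ring
        _ ≤ 4 * Real.sqrt ((b - k : ℕ)) + 1 := by linarith
        _ = 4 * Real.sqrt ((b:ℝ) - (k:ℝ)) + 1 := by rw [hcast]
        _ ≤ 4 * Real.sqrt b := by linarith
end

section
/- Let T:ℕ→ℕ satisfy T(0)=0 and T(b) ≤ T(b − ⌈√(b/2)⌉) + 1 for every b ≥ 1. Then T(b) ≤ 2√(2b) for every b∈ℕ. -/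
theorem stmt12 (T : ℕ → ℕ) (h0 : T 0 = 0)
    (hrec : ∀ b : ℕ, 1 ≤ b → T b ≤ T (b - ⌈Real.sqrt (b / 2)⌉₊) + 1) :
    ∀ b : ℕ, (T b : ℝ) ≤ 2 * Real.sqrt (2 * b) := by
  intro b
  induction b using Nat.strong_induction_on with
  | _ b ih =>
    rcases Nat.eq_zero_or_pos b with rfl | hb
    · simp [h0]
    · set s := ⌈Real.sqrt ((b : ℝ) / 2)⌉₊ with hsdef
      have hbR : (1:ℝ) ≤ (b:ℝ) := by exact_mod_cast hb
      have hhalf : (0:ℝ) < (b:ℝ)/2 := by linarith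
      have hs1 : 0 < s := Nat.ceil_pos.mpr (Real.sqrt_pos.mpr hhalf)
      have hr : Real.sqrt ((b:ℝ)/2) ≤ (s:ℝ) := Nat.le_ceil _
      have hsb : s ≤ b := by
        apply Nat.ceil_le.mpr
        have : Real.sqrt ((b:ℝ)/2) ≤ Real.sqrt ((b:ℝ)^2) := by
          apply Real.sqrt_le_sqrt; nlinarith
        rwa [Real.sqrt_sq (by linarith)] at this
      have hlt : b - s < b := by omega
      have hcast : ((b - s : ℕ) : ℝ) = (b:ℝ) - (s:ℝ) := by
        push_cast [hsb]; ring
      have hsq : Real.sqrt (2*(b:ℝ)) ^ 2 = 2*(b:ℝ) := Real.sq_sqrt (by linarith)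
      have h4 : Real.sqrt (2*(b:ℝ)) = 2 * Real.sqrt ((b:ℝ)/2) := by
        rw [show (2:ℝ)*(b:ℝ) = 4*((b:ℝ)/2) by ring,
          Real.sqrt_mul (by norm_num : (0:ℝ) ≤ 4),
          show Real.sqrt 4 = 2 by
            rw [show (4:ℝ) = 2^2 by norm_num, Real.sqrt_sq (by norm_num)]]
      have hge : (1/2 : ℝ) ≤ Real.sqrt (2*(b:ℝ)) := by
        nlinarith [Real.sqrt_nonneg (2*(b:ℝ))]
      have key : 2*((b:ℝ) - (s:ℝ)) ≤ (Real.sqrt (2*(b:ℝ)) - 1/2)^2 := by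
        nlinarith [hr, hsq, h4, Real.sqrt_nonneg ((b:ℝ)/2)]
      have h1 : Real.sqrt (2*((b:ℝ) - (s:ℝ))) ≤ Real.sqrt (2*(b:ℝ)) - 1/2 := by
        have := Real.sqrt_le_sqrt key
        rwa [Real.sqrt_sq (by linarith)] at this
      have hih := ih (b - s) hlt
      have hrec' := hrec b hb
      calc (T b : ℝ) ≤ (T (b - s) : ℝ) + 1 := by exact_mod_cast hrec'
        _ ≤ 2 * Real.sqrt (2 * ((b - s : ℕ) : ℝ)) + 1 := by linarith
        _ ≤ 2 * Real.sqrt (2 * (b:ℝ)) := by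
            rw [hcast] at *
            linarith [h1]
end

section
/- Let G=(V,E,w) be a finite graph with integer edge weights, M a matching, and y:V→ℝ. Let P ⊆ E be a set of edges such that both P∩M and P∖M are matchings, and every vertex that is covered by exactly one of P∩M and P∖M (but not both) satisfies y(v)=0. Assume (tight unmatched edges) y(u)+y(v) = w(e) for every e=(u,v)∈P∖M, (dominated matched edges) y(u)+y(v) ≥ w(e) for every e=(u,v)∈P∩M, with strict inequality y(u)+y(v) > w(e) for at least one e∈P∩M. Then w(P∖M) ≥ w(P∩M) + 1; consequently, if M⊕P (the symmetric difference) is a matching, then w(M⊕P) ≥ w(M) + 1. -/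
open scoped Classical

noncomputable def vset {V : Type*} [Fintype V] [DecidableEq V] (e : Sym2 V) :
    Finset V := Finset.univ.filter (· ∈ e)

lemma mem_vset {V : Type*} [Fintype V] [DecidableEq V] (e : Sym2 V) (v : V) :
    v ∈ vset e ↔ v ∈ e := by simp [vset]

lemma sum_vset {V : Type*} [Fintype V] [DecidableEq V] (u v : V) (h : u ≠ v)
    (y : V → ℝ) : ∑ x ∈ vset s(u, v), y x = y u + y v := by
  have : vset s(u, v) = {u, v} := by
    ext x; simp [mem_vset, Sym2.mem_iff]
  rw [this, Finset.sum_pair h]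

/-- For a matching `N` whose edges are vertex-disjoint, the sum of `y` over
covered vertices equals the sum over edges of the endpoint sums. -/
lemma sum_cover {V : Type*} [Fintype V] [DecidableEq V]
    {E N : Finset (Sym2 V)} (hN : IsMatching E N) (y : V → ℝ) :
    ∑ v ∈ N.biUnion vset, y v = ∑ e ∈ N, ∑ v ∈ vset e, y v := by
  refine Finset.sum_biUnion ?_
  intro e₁ h₁ e₂ h₂ hne
  refine Finset.disjoint_left.2 fun v hv₁ hv₂ => ?_
  exact hne (hN.2.2 e₁ h₁ e₂ h₂ v ((mem_vset _ _).1 hv₁) ((mem_vset _ _).1 hv₂))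

theorem stmt13 {V : Type*} [Fintype V] [DecidableEq V]
    (E : Finset (Sym2 V)) (w : Sym2 V → ℤ)
    (M : Finset (Sym2 V)) (hM : IsMatching E M)
    (y : V → ℝ)
    (P : Finset (Sym2 V)) (hPE : P ⊆ E)
    (hPM : IsMatching E (P ∩ M)) (hPM' : IsMatching E (P \ M))
    (hy0 : ∀ v : V, Xor' (∃ e ∈ P ∩ M, v ∈ e) (∃ e ∈ P \ M, v ∈ e) → y v = 0)
    (htight : ∀ u v : V, s(u, v) ∈ P \ M → y u + y v = (w s(u, v) : ℝ))
    (hdom : ∀ u v : V, s(u, v) ∈ P ∩ M → (w s(u, v) : ℝ) ≤ y u + y v)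
    (hstrict : ∃ u v : V, s(u, v) ∈ P ∩ M ∧ (w s(u, v) : ℝ) < y u + y v) :
    (∑ e ∈ P ∩ M, w e) + 1 ≤ ∑ e ∈ P \ M, w e ∧
      (IsMatching E ((M \ P) ∪ (P \ M)) →
        (∑ e ∈ M, w e) + 1 ≤ ∑ e ∈ (M \ P) ∪ (P \ M), w e) := by
  set A := (P ∩ M).biUnion vset with hA
  set B := (P \ M).biUnion vset with hB
  -- vertices covered by exactly one side have y = 0
  have hzero : ∀ v : V, (v ∈ A ∧ v ∉ B) ∨ (v ∈ B ∧ v ∉ A) → y v = 0 := by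
    intro v hv
    apply hy0
    have hmemA : v ∈ A ↔ ∃ e ∈ P ∩ M, v ∈ e := by
      simp [hA, Finset.mem_biUnion, mem_vset]
    have hmemB : v ∈ B ↔ ∃ e ∈ P \ M, v ∈ e := by
      simp [hB, Finset.mem_biUnion, mem_vset]
    rcases hv with ⟨h1, h2⟩ | ⟨h1, h2⟩
    · exact Or.inl ⟨hmemA.1 h1, fun h => h2 (hmemB.2 h)⟩
    · exact Or.inr ⟨hmemB.1 h1, fun h => h2 (hmemA.2 h)⟩
  -- the two covered-vertex sums of y coincide
  have hsum_eq : ∑ v ∈ A, y v = ∑ v ∈ B, y v := by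
    rw [← Finset.sum_inter_add_sum_sdiff A B y, ← Finset.sum_inter_add_sum_sdiff B A y,
      Finset.inter_comm B A]
    have h1 : ∑ v ∈ A \ B, y v = 0 :=
      Finset.sum_eq_zero fun v hv => hzero v (Or.inl (Finset.mem_sdiff.1 hv))
    have h2 : ∑ v ∈ B \ A, y v = 0 :=
      Finset.sum_eq_zero fun v hv => hzero v (Or.inr (Finset.mem_sdiff.1 hv))
    rw [h1, h2]
  -- edge-wise endpoint sums
  have hpair : ∀ (N : Finset (Sym2 V)), IsMatching E N →
      ∀ e ∈ N, ∃ u v : V, u ≠ v ∧ e = s(u, v) ∧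
        ∑ x ∈ vset e, y x = y u + y v := by
    intro N hN e he
    induction e using Sym2.ind with
    | _ u v =>
      have hne : u ≠ v := by
        intro h; exact hN.2.1 _ he (by simp [h])
      exact ⟨u, v, hne, rfl, sum_vset u v hne y⟩
  -- sum over B equals integer weight sum of P \ M
  have hBsum : ∑ v ∈ B, y v = ((∑ e ∈ P \ M, w e : ℤ) : ℝ) := by
    rw [hB, sum_cover hPM' y, Int.cast_sum]
    refine Finset.sum_congr rfl fun e he => ?_
    obtain ⟨u, v, hne, rfl, hs⟩ := hpair _ hPM' e he
    rw [hs, htight u v he]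
  -- strict inequality for P ∩ M
  have hAsum : ((∑ e ∈ P ∩ M, w e : ℤ) : ℝ) < ∑ v ∈ A, y v := by
    rw [hA, sum_cover hPM y, Int.cast_sum]
    obtain ⟨u₀, v₀, he₀, hstr⟩ := hstrict
    refine Finset.sum_lt_sum (fun e he => ?_) ⟨s(u₀, v₀), he₀, ?_⟩
    · obtain ⟨u, v, hne, rfl, hs⟩ := hpair _ hPM e he
      rw [hs]; exact hdom u v he
    · obtain ⟨u, v, hne, heq, hs⟩ := hpair _ hPM s(u₀, v₀) he₀
      rw [hs]
      calc ((w s(u₀,v₀) : ℤ) : ℝ) < y u₀ + y v₀ := hstr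
        _ = ∑ x ∈ vset s(u₀, v₀), y x := (sum_vset u₀ v₀ (by
              intro h; exact hPM.2.1 _ he₀ (by simp [h])) y).symm
        _ = y u + y v := by rw [heq, sum_vset u v hne y]
  have hlt : ((∑ e ∈ P ∩ M, w e : ℤ) : ℝ) < ((∑ e ∈ P \ M, w e : ℤ) : ℝ) := by
    calc ((∑ e ∈ P ∩ M, w e : ℤ) : ℝ) < ∑ v ∈ A, y v := hAsum
      _ = ∑ v ∈ B, y v := hsum_eq
      _ = _ := hBsum
  have key : (∑ e ∈ P ∩ M, w e) + 1 ≤ ∑ e ∈ P \ M, w e := by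
    exact_mod_cast Int.add_one_le_of_lt (by exact_mod_cast hlt)
  refine ⟨key, fun _ => ?_⟩
  have hdisj : Disjoint (M \ P) (P \ M) :=
    Finset.disjoint_left.2 fun e he₁ he₂ =>
      (Finset.mem_sdiff.1 he₁).2 (Finset.mem_sdiff.1 he₂).1
  have hMsplit : ∑ e ∈ M ∩ P, w e + ∑ e ∈ M \ P, w e = ∑ e ∈ M, w e :=
    Finset.sum_inter_add_sum_sdiff M P w
  rw [Finset.inter_comm] at hMsplit
  rw [Finset.sum_union hdisj]
  omega
end
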